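/- arXiv:1002.0348 — 4 statements merged into one kernel-verified Lean document; each statement's English description precedes it below -/
import Mathlib

section
/- Fix ℓ ≥ 1 and integers 0 ≤ n_1 ≤ n_2 ≤ … ≤ n_ℓ. There is a bijection between the product set π_{n_1} × π_{n_2−n_1} × ⋯ × π_{n_ℓ−n_{ℓ−1}} of tuples of partitions (where π_m is the set of partitions of length at most m) and the set of sequences ((i_1, r_1), …, (i_n, r_n)) with n = n_1 + (n_2−n_1) + … + (n_ℓ−n_{ℓ−1}) = n_ℓ, i_t ∈ {1,…,ℓ}, r_t ∈ ℤ_{>0}, such that: #{t : i_t = 1} = n_1 and #{t : i_t = s} = n_s − n_{s−1} for s ≥ 2; the sequence is sorted so that (i_{t}, r_{t}) precedes (i_{t+1}, r_{t+1}) in the order (−r < −r', or r = r' and larger row index first); r_{t+1} − r_t ≥ θ(i_t − i_{t+1}) + 1 for all t; and r_1 ≥ 1. Moreover, under this bijection, the total degree r_1 + … + r_n of the image exceeds the total weight of the tuple of partitions by the constant Σ_{i=1}^{ℓ} n_i² − Σ_{i=1}^{ℓ−1} n_i n_{i+1}. -/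
/-!
Adding the staircase `j` to the `j`-th part of the (increasingly listed) partition `λⁱ` turns it
into `n_{i+1} - n_i` distinct values, which we give colour `i + 1`. Merging all coloured values in
lexicographic order (value first, then colour) gives a strictly increasing chain `(v_t, c_t)`, and
the sequence is `(i_t, r_t) := (c_t, v_t + t + 1)`. Since `r_{t+1} - r_t - 1 = v_{t+1} - v_t`, the
difference condition `r_{t+1} - r_t ≥ θ(i_t - i_{t+1}) + 1` says exactly that `(v_t, c_t)` increases
lexicographically, so both steps can be inverted. The degree grows by
`∑_t (t + 1) + ∑_i ∑_{j < n_{i+1} - n_i} j`, which telescopes to `∑ n_i² - ∑ n_i n_{i+1}`.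
-/

def theta (k : ℤ) : ℤ := if k < 0 then 0 else 1

open Finset

namespace ColouredSequence

lemma theta_nonneg (k : ℤ) : 0 ≤ theta k := by
  unfold theta
  split_ifs <;> norm_num

lemma toLex_lt_toLex_iff_theta_le {a b : ℕ × ℕ} :
    toLex a < toLex b ↔ theta ((a.2 : ℤ) - b.2) ≤ (b.1 : ℤ) - a.1 := by
  rw [Prod.Lex.toLex_lt_toLex]
  unfold theta
  split_ifs <;> omega

lemma _root_.Fin.val_le_of_strictMono {m : ℕ} {e : Fin m → ℕ} (he : StrictMono e)
    (j : Fin m) : (j : ℕ) ≤ e j := by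
  obtain ⟨j, hj⟩ := j
  induction j with
  | zero => exact Nat.zero_le _
  | succ j ih => exact (ih (by omega)).trans_lt (he (Fin.mk_lt_mk.2 j.lt_succ_self))

lemma _root_.Fin.monotone_iff_strictMono_add_val {m : ℕ} {f : Fin m → ℕ} :
    Monotone f ↔ StrictMono fun j => f j + j := by
  cases m with
  | zero => exact iff_of_true (fun a => a.elim0) (fun a => a.elim0)
  | succ m =>
    rw [Fin.monotone_iff_le_succ, Fin.strictMono_iff_lt_succ]
    refine forall_congr' fun j => ?_
    simp only [Fin.val_castSucc, Fin.val_succ]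
    omega

lemma _root_.Fin.strictMono_iff_lt_mk_succ {α : Type*} [Preorder α] {N : ℕ} {f : Fin N → α} :
    StrictMono f ↔ ∀ t (h : t + 1 < N), f ⟨t, Nat.lt_of_succ_lt h⟩ < f ⟨t + 1, h⟩ := by
  cases N with
  | zero => exact iff_of_true (fun a => a.elim0) (fun t h => by omega)
  | succ N =>
    rw [Fin.strictMono_iff_lt_succ]
    exact ⟨fun h t ht => h ⟨t, by omega⟩, fun h j => h j (by omega)⟩

section Chain

variable {ℓ N : ℕ} {m : Fin ℓ → ℕ} {g : Fin N → ℕ × ℕ} {lam : (i : Fin ℓ) → Fin (m i) → ℕ}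

structure IsColouredChain (ℓ : ℕ) (m : Fin ℓ → ℕ) (g : Fin N → ℕ × ℕ) : Prop where
  strictMono : StrictMono (toLex ∘ g)
  colour_mem : ∀ t, 1 ≤ (g t).2 ∧ (g t).2 ≤ ℓ
  card_colour : ∀ i : Fin ℓ, #{t | (g t).2 = (i : ℕ) + 1} = m i

def colourValues (g : Fin N → ℕ × ℕ) (c : ℕ) : Finset ℕ :=
  (univ.filter fun t => (g t).2 = c).image fun t => (g t).1

lemma mem_colourValues {c v : ℕ} :
    v ∈ colourValues g c ↔ ∃ t, g t = (v, c) := by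
  simp [colourValues, Prod.ext_iff, and_comm]

lemma card_colourValues_of_injective (hg : Function.Injective g) (c : ℕ) :
    #(colourValues g c) = #{t | (g t).2 = c} := by
  refine card_image_of_injOn fun t ht t' ht' h => hg (Prod.ext h ?_)
  simp only [coe_filter, mem_univ, true_and, Set.mem_ofPred_eq] at ht ht'
  rw [ht, ht']

lemma IsColouredChain.injective (hg : IsColouredChain ℓ m g) :
    Function.Injective g :=
  hg.strictMono.injective.of_comp

lemma IsColouredChain.card_colourValues (hg : IsColouredChain ℓ m g) (i : Fin ℓ) :
    #(colourValues g (i + 1)) = m i :=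
  (card_colourValues_of_injective hg.injective _).trans (hg.card_colour i)

noncomputable def ofChain (hg : IsColouredChain ℓ m g) (i : Fin ℓ)
    (j : Fin (m i)) : ℕ :=
  (colourValues g (i + 1)).orderEmbOfFin (hg.card_colourValues i) j - j

lemma ofChain_add_val (hg : IsColouredChain ℓ m g) (i : Fin ℓ) (j : Fin (m i)) :
    ofChain hg i j + j = (colourValues g (i + 1)).orderEmbOfFin (hg.card_colourValues i) j :=
  Nat.sub_add_cancel (Fin.val_le_of_strictMono (OrderEmbedding.strictMono _) j)

lemma monotone_ofChain (hg : IsColouredChain ℓ m g) (i : Fin ℓ) :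
    Monotone (ofChain hg i) := by
  rw [Fin.monotone_iff_strictMono_add_val]
  simp_rw [ofChain_add_val]
  exact OrderEmbedding.strictMono _

def colouredPart (lam : (i : Fin ℓ) → Fin (m i) → ℕ) (x : (i : Fin ℓ) × Fin (m i)) :
    ℕ ×ₗ ℕ :=
  toLex (lam x.1 x.2 + x.2, x.1 + 1)

lemma colouredPart_injective (hlam : ∀ i, Monotone (lam i)) :
    Function.Injective (colouredPart lam) := by
  rintro ⟨i, j⟩ ⟨i', j'⟩ h
  simp only [colouredPart, toLex_inj, Prod.ext_iff, add_left_inj] at h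
  obtain rfl : i = i' := Fin.ext h.2
  rw [(Fin.monotone_iff_strictMono_add_val.1 (hlam i)).injective h.1]

def colouredParts (lam : (i : Fin ℓ) → Fin (m i) → ℕ) : Finset (ℕ ×ₗ ℕ) :=
  univ.image (colouredPart lam)

lemma mem_colouredParts {v c : ℕ} :
    toLex (v, c) ∈ colouredParts lam ↔ ∃ i j, lam i j + j = v ∧ (i : ℕ) + 1 = c := by
  simp [colouredParts, colouredPart, Sigma.exists]

lemma card_colouredParts (hlam : ∀ i, Monotone (lam i)) :
    #(colouredParts lam) = ∑ i, m i := by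
  simp [colouredParts, card_image_of_injective _ (colouredPart_injective hlam)]

noncomputable def toChain (hlam : ∀ i, Monotone (lam i)) (hN : ∑ i, m i = N) (t : Fin N) :
    ℕ × ℕ :=
  ofLex ((colouredParts lam).orderEmbOfFin ((card_colouredParts hlam).trans hN) t)

section toChain

variable (hlam : ∀ i, Monotone (lam i)) (hN : ∑ i, m i = N)

lemma exists_toChain_eq_iff {a : ℕ × ℕ} :
    (∃ t, toChain hlam hN t = a) ↔ toLex a ∈ colouredParts lam := by
  rw [← mem_coe, ← range_orderEmbOfFin _ ((card_colouredParts hlam).trans hN)]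
  exact exists_congr fun t => toLex.symm_apply_eq

lemma toLex_comp_toChain : toLex ∘ toChain hlam hN =
    (colouredParts lam).orderEmbOfFin ((card_colouredParts hlam).trans hN) :=
  rfl

lemma strictMono_toChain : StrictMono (toLex ∘ toChain hlam hN) := by
  rw [toLex_comp_toChain]
  exact OrderEmbedding.strictMono _

lemma toLex_toChain_mem (t : Fin N) : toLex (toChain hlam hN t) ∈ colouredParts lam :=
  (exists_toChain_eq_iff hlam hN).1 ⟨t, rfl⟩

lemma colourValues_toChain (i : Fin ℓ) :
    colourValues (toChain hlam hN) (i + 1) = univ.image fun j => lam i j + j := by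
  ext v
  simp only [mem_colourValues, exists_toChain_eq_iff, mem_colouredParts, mem_image, mem_univ,
    true_and]
  constructor
  · rintro ⟨i', j, hv, hi⟩
    obtain rfl : i' = i := Fin.ext (by omega)
    exact ⟨j, hv⟩
  · rintro ⟨j, hv⟩
    exact ⟨i, j, hv, rfl⟩

lemma isColouredChain_toChain : IsColouredChain ℓ m (toChain hlam hN) where
  strictMono := strictMono_toChain hlam hN
  colour_mem t := by
    obtain ⟨i, j, -, hi⟩ := (mem_colouredParts (v := (toChain hlam hN t).1)
      (c := (toChain hlam hN t).2)).1 (toLex_toChain_mem hlam hN t)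
    have := i.2
    constructor <;> omega
  card_colour i := by
    rw [← card_colourValues_of_injective (strictMono_toChain hlam hN).injective.of_comp,
      colourValues_toChain,
      card_image_of_injective _ (Fin.monotone_iff_strictMono_add_val.1 (hlam i)).injective,
      card_univ, Fintype.card_fin]

lemma ofChain_toChain : ofChain (isColouredChain_toChain hlam hN) = lam := by
  funext i j
  have hunique : (fun j => lam i j + j) = (colourValues (toChain hlam hN) (i + 1)).orderEmbOfFin
      ((isColouredChain_toChain hlam hN).card_colourValues i) :=
    orderEmbOfFin_unique _
      (fun j => colourValues_toChain hlam hN i ▸ mem_image_of_mem _ (mem_univ j))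
      (Fin.monotone_iff_strictMono_add_val.1 (hlam i))
  rw [ofChain, ← hunique, Nat.add_sub_cancel]

lemma sum_toChain_fst :
    ∑ t, ((toChain hlam hN t).1 : ℤ) = ∑ i, ∑ j, ((lam i j : ℤ) + j) := by
  have hparts : univ.image (toLex ∘ toChain hlam hN) = colouredParts lam := by
    rw [toLex_comp_toChain, image_orderEmbOfFin_univ]
  calc ∑ t, ((toChain hlam hN t).1 : ℤ)
      = ∑ y ∈ colouredParts lam, ((ofLex y).1 : ℤ) := by
        rw [← hparts, sum_image (strictMono_toChain hlam hN).injective.injOn]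
        rfl
    _ = ∑ x, ((ofLex (colouredPart lam x)).1 : ℤ) := by
        rw [colouredParts, sum_image (colouredPart_injective hlam).injOn]
    _ = ∑ i, ∑ j, ((lam i j : ℤ) + j) := by
        simp [Fintype.sum_sigma, colouredPart]

end toChain

lemma toChain_ofChain (hg : IsColouredChain ℓ m g) (hN : ∑ i, m i = N) :
    toChain (monotone_ofChain hg) hN = g := by
  have hmem : ∀ t, toLex (g t) ∈ colouredParts (ofChain hg) := by
    intro t
    obtain ⟨h1, h2⟩ := hg.colour_mem t
    let i : Fin ℓ := ⟨(g t).2 - 1, by omega⟩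
    have hv : (g t).1 ∈ colourValues g (i + 1) :=
      mem_colourValues.2 ⟨t, Prod.ext rfl (by simp [i]; omega)⟩
    rw [← mem_coe, ← range_orderEmbOfFin _ (hg.card_colourValues i)] at hv
    obtain ⟨j, hj⟩ := hv
    exact mem_colouredParts.2 ⟨i, j, (ofChain_add_val hg i j).trans hj, by simp [i]; omega⟩
  funext t
  exact congrArg ofLex (congrFun (orderEmbOfFin_unique _ hmem hg.strictMono) t).symm

noncomputable def partitionsEquivChains (hN : ∑ i, m i = N) :
    {lam : (i : Fin ℓ) → Fin (m i) → ℕ // ∀ i, Monotone (lam i)} ≃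
      {g : Fin N → ℕ × ℕ // IsColouredChain ℓ m g} where
  toFun lam := ⟨toChain lam.2 hN, isColouredChain_toChain lam.2 hN⟩
  invFun g := ⟨ofChain g.2, monotone_ofChain g.2⟩
  left_inv lam := Subtype.ext (ofChain_toChain lam.2 hN)
  right_inv g := Subtype.ext (toChain_ofChain g.2 hN)

end Chain

section DifferenceSeq

variable {ℓ N : ℕ} {m : Fin ℓ → ℕ} {g p : Fin N → ℕ × ℕ}

structure IsDifferenceSeq (ℓ : ℕ) (m : Fin ℓ → ℕ) (p : Fin N → ℕ × ℕ) : Prop where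
  mem : ∀ t, 1 ≤ (p t).1 ∧ (p t).1 ≤ ℓ ∧ 1 ≤ (p t).2
  card_colour : ∀ i : Fin ℓ, #{t | (p t).1 = (i : ℕ) + 1} = m i
  difference : ∀ t (h : t + 1 < N),
    ((p ⟨t + 1, h⟩).2 : ℤ) - (p ⟨t, Nat.lt_of_succ_lt h⟩).2 ≥
      theta (((p ⟨t, Nat.lt_of_succ_lt h⟩).1 : ℤ) - (p ⟨t + 1, h⟩).1) + 1

def toSeq (g : Fin N → ℕ × ℕ) (t : Fin N) : ℕ × ℕ :=
  ((g t).2, (g t).1 + t + 1)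

/-- The truncated subtraction is harmless: `t + 1 ≤ (p t).2` by `IsDifferenceSeq.le_snd`. -/
def ofSeq (p : Fin N → ℕ × ℕ) (t : Fin N) : ℕ × ℕ :=
  ((p t).2 - (t + 1), (p t).1)

lemma IsDifferenceSeq.snd_lt_snd (hp : IsDifferenceSeq ℓ m p) (t : ℕ)
    (h : t + 1 < N) : (p ⟨t, Nat.lt_of_succ_lt h⟩).2 < (p ⟨t + 1, h⟩).2 := by
  have := hp.difference t h
  have := theta_nonneg (((p ⟨t, Nat.lt_of_succ_lt h⟩).1 : ℤ) - (p ⟨t + 1, h⟩).1)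
  omega

lemma IsDifferenceSeq.le_snd (hp : IsDifferenceSeq ℓ m p) (t : Fin N) :
    (t : ℕ) + 1 ≤ (p t).2 := by
  obtain ⟨t, ht⟩ := t
  induction t with
  | zero => exact (hp.mem _).2.2
  | succ t ih => exact (ih (by omega)).trans_lt (hp.snd_lt_snd t ht)

lemma isDifferenceSeq_toSeq (hg : IsColouredChain ℓ m g) :
    IsDifferenceSeq ℓ m (toSeq g) where
  mem t := by
    have := hg.colour_mem t
    simp only [toSeq]
    omega
  card_colour := hg.card_colour
  difference t h := by
    have := toLex_lt_toLex_iff_theta_le.1 (Fin.strictMono_iff_lt_mk_succ.1 hg.strictMono t h)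
    simp only [toSeq] at this ⊢
    push_cast
    linarith

lemma isColouredChain_ofSeq (hp : IsDifferenceSeq ℓ m p) :
    IsColouredChain ℓ m (ofSeq p) where
  strictMono := by
    refine Fin.strictMono_iff_lt_mk_succ.2 fun t h => toLex_lt_toLex_iff_theta_le.2 ?_
    have h1 := hp.le_snd ⟨t, Nat.lt_of_succ_lt h⟩
    have h2 := hp.le_snd ⟨t + 1, h⟩
    have := hp.difference t h
    simp only [ofSeq] at h1 h2 ⊢
    push_cast [h1, h2]
    linarith
  colour_mem t := ⟨(hp.mem t).1, (hp.mem t).2.1⟩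
  card_colour := hp.card_colour

lemma ofSeq_toSeq (g : Fin N → ℕ × ℕ) : ofSeq (toSeq g) = g := by
  funext t
  simp [ofSeq, toSeq]

lemma toSeq_ofSeq (hp : IsDifferenceSeq ℓ m p) : toSeq (ofSeq p) = p := by
  funext t
  refine Prod.ext rfl ?_
  have := hp.le_snd t
  simp only [toSeq, ofSeq]
  omega

def chainsEquivDifferenceSeqs :
    {g : Fin N → ℕ × ℕ // IsColouredChain ℓ m g} ≃
      {p : Fin N → ℕ × ℕ // IsDifferenceSeq ℓ m p} where
  toFun g := ⟨toSeq g, isDifferenceSeq_toSeq g.2⟩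
  invFun p := ⟨ofSeq p, isColouredChain_ofSeq p.2⟩
  left_inv g := Subtype.ext (ofSeq_toSeq g.1)
  right_inv p := Subtype.ext (toSeq_ofSeq p.2)

lemma sum_toSeq_snd (g : Fin N → ℕ × ℕ) :
    ∑ t, ((toSeq g t).2 : ℤ) = ∑ t, ((g t).1 : ℤ) + ∑ t : Fin N, ((t : ℤ) + 1) := by
  simp only [toSeq, ← sum_add_distrib]
  push_cast
  simp only [add_assoc]

lemma isDifferenceSeq_iff {n : ℕ → ℕ} {p : Fin (n ℓ) → ℕ × ℕ} :
    IsDifferenceSeq ℓ (fun i => n (i + 1) - n i) p ↔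
      (∀ t, 1 ≤ (p t).1 ∧ (p t).1 ≤ ℓ ∧ 1 ≤ (p t).2) ∧
      (∀ s, 1 ≤ s → s ≤ ℓ →
        (Finset.univ.filter (fun t => (p t).1 = s)).card = n s - n (s - 1)) ∧
      (∀ t : ℕ, (h : t + 1 < n ℓ) →
        (p ⟨t, Nat.lt_of_succ_lt h⟩).2 < (p ⟨t + 1, h⟩).2 ∨
        ((p ⟨t, Nat.lt_of_succ_lt h⟩).2 = (p ⟨t + 1, h⟩).2 ∧
          (p ⟨t, Nat.lt_of_succ_lt h⟩).1 > (p ⟨t + 1, h⟩).1)) ∧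
      (∀ t : ℕ, (h : t + 1 < n ℓ) →
        ((p ⟨t + 1, h⟩).2 : ℤ) - ((p ⟨t, Nat.lt_of_succ_lt h⟩).2 : ℤ) ≥
          theta (((p ⟨t, Nat.lt_of_succ_lt h⟩).1 : ℤ) - ((p ⟨t + 1, h⟩).1 : ℤ)) + 1) := by
  refine ⟨fun hp => ⟨hp.mem, fun s h1 h2 => ?_, fun t h => Or.inl (hp.snd_lt_snd t h),
    hp.difference⟩, fun ⟨hmem, hcard, _, hdiff⟩ => ⟨hmem, fun i => ?_, hdiff⟩⟩
  · simpa [Nat.sub_add_cancel h1] using hp.card_colour ⟨s - 1, by omega⟩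
  · simpa using hcard (i + 1) (by omega) i.2

end DifferenceSeq

section Staircase

variable {ℓ : ℕ} {n : ℕ → ℕ}

lemma sum_range_sub_eq (h0 : n 0 = 0) (hmono : ∀ i, i < ℓ → n i ≤ n (i + 1)) :
    ∀ L ≤ ℓ, ∑ i ∈ range L, (n (i + 1) - n i) = n L
  | 0, _ => by simp [h0]
  | L + 1, hL => by
    rw [sum_range_succ, sum_range_sub_eq h0 hmono L (by omega)]
    have := hmono L (by omega)
    omega

lemma sum_range_layer (a d : ℕ) :
    ∑ k ∈ range d, (((a + k : ℕ) : ℤ) + 1 + k) = d * (a + d) := by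
  induction d with
  | zero => simp
  | succ d ih =>
    rw [sum_range_succ, ih]
    push_cast
    ring

lemma sum_range_staircase (h0 : n 0 = 0) (hmono : ∀ i, i < ℓ → n i ≤ n (i + 1)) :
    ∀ L ≤ ℓ, ∑ i ∈ range L, ∑ j ∈ range (n (i + 1) - n i), (j : ℤ) +
        ∑ t ∈ range (n L), ((t : ℤ) + 1) =
      ∑ i ∈ Icc 1 L, (n i : ℤ) ^ 2 - ∑ i ∈ Icc 1 (L - 1), (n i : ℤ) * n (i + 1)
  | 0, _ => by simp [h0]
  | L + 1, hL => by
    have ih := sum_range_staircase h0 hmono L (by omega)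
    obtain ⟨d, hd⟩ : ∃ d, n (L + 1) = n L + d := ⟨_, (Nat.add_sub_cancel' (hmono L hL)).symm⟩
    have hcross : ∑ i ∈ Icc 1 L, (n i : ℤ) * n (i + 1) =
        ∑ i ∈ Icc 1 (L - 1), (n i : ℤ) * n (i + 1) + n L * n (L + 1) := by
      cases L with
      | zero => simp [h0]
      | succ K => exact sum_Icc_succ_top (by omega) _
    have hlayer := sum_range_layer (n L) d
    rw [sum_range_succ, hd, Nat.add_sub_cancel_left, sum_range_add, sum_Icc_succ_top (by omega),
      Nat.add_sub_cancel, hcross, hd]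
    rw [sum_add_distrib] at hlayer
    push_cast at hlayer ⊢
    linear_combination ih + hlayer

end Staircase

end ColouredSequence

open ColouredSequence

theorem stmt4_general (ℓ : ℕ) (n : ℕ → ℕ) (h0 : n 0 = 0)
    (hmono : ∀ i, i < ℓ → n i ≤ n (i + 1)) :
    ∃ e : {lam : (i : Fin ℓ) → Fin (n (i.1 + 1) - n i.1) → ℕ //
            ∀ i, Monotone (lam i)} ≃
          {p : Fin (n ℓ) → ℕ × ℕ //
            (∀ t, 1 ≤ (p t).1 ∧ (p t).1 ≤ ℓ ∧ 1 ≤ (p t).2) ∧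
            (∀ s, 1 ≤ s → s ≤ ℓ →
              (Finset.univ.filter (fun t => (p t).1 = s)).card = n s - n (s - 1)) ∧
            (∀ t : ℕ, (h : t + 1 < n ℓ) →
              (p ⟨t, Nat.lt_of_succ_lt h⟩).2 < (p ⟨t + 1, h⟩).2 ∨
              ((p ⟨t, Nat.lt_of_succ_lt h⟩).2 = (p ⟨t + 1, h⟩).2 ∧
                (p ⟨t, Nat.lt_of_succ_lt h⟩).1 > (p ⟨t + 1, h⟩).1)) ∧
            (∀ t : ℕ, (h : t + 1 < n ℓ) →
              ((p ⟨t + 1, h⟩).2 : ℤ) - ((p ⟨t, Nat.lt_of_succ_lt h⟩).2 : ℤ) ≥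
                theta (((p ⟨t, Nat.lt_of_succ_lt h⟩).1 : ℤ) - ((p ⟨t + 1, h⟩).1 : ℤ)) + 1)},
      ∀ a, (∑ t, (((e a).1 t).2 : ℤ)) =
        (∑ i, ∑ s, ((a.1 i s : ℤ))) +
        ((∑ i ∈ Finset.Icc 1 ℓ, (n i : ℤ) ^ 2)
          - ∑ i ∈ Finset.Icc 1 (ℓ - 1), (n i : ℤ) * (n (i + 1) : ℤ)) := by
  have hN : ∑ i : Fin ℓ, (n (i + 1) - n i) = n ℓ := by
    rw [Fin.sum_univ_eq_sum_range (fun i => n (i + 1) - n i)]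
    exact sum_range_sub_eq h0 hmono ℓ le_rfl
  refine ⟨(partitionsEquivChains hN).trans
    (chainsEquivDifferenceSeqs.trans (Equiv.subtypeEquivRight fun _ => isDifferenceSeq_iff)),
    fun a => ?_⟩
  have hstair := sum_range_staircase h0 hmono ℓ le_rfl
  rw [← Fin.sum_univ_eq_sum_range (fun t => (t : ℤ) + 1),
    ← Fin.sum_univ_eq_sum_range (fun i => ∑ j ∈ range (n (i + 1) - n i), (j : ℤ))] at hstair
  simp only [← Fin.sum_univ_eq_sum_range (fun j => (j : ℤ))] at hstair
  show ∑ t, ((toSeq (toChain a.2 hN) t).2 : ℤ) = _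
  rw [sum_toSeq_snd, sum_toChain_fst, ← hstair]
  simp only [sum_add_distrib]
  ring

/-- The bijection underlying the character formula
χ^α_{W(Λ_0)}(q) = q^{Σ n_i² − Σ n_i n_{i+1}} / ((q)_{n_1}(q)_{n_2−n_1}⋯(q)_{n_ℓ−n_{ℓ−1}})
for type A_ℓ with ω = ω_ℓ: tuples of partitions (λ^1,…,λ^ℓ), λ^s of length at most
n_s − n_{s−1}, correspond bijectively to difference-condition-satisfying colored sequences
of length n_ℓ with prescribed color multiplicities, and the total degree of the sequence
exceeds the total weight of the partitions by Σ n_i² − Σ n_i n_{i+1}. -/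
theorem stmt4 (ℓ : ℕ) (hl : 1 ≤ ℓ) (n : ℕ → ℕ) (h0 : n 0 = 0)
    (hmono : ∀ i, i < ℓ → n i ≤ n (i + 1)) :
    ∃ e : {lam : (i : Fin ℓ) → Fin (n (i.1 + 1) - n i.1) → ℕ //
            ∀ i, Monotone (lam i)} ≃
          {p : Fin (n ℓ) → ℕ × ℕ //
            (∀ t, 1 ≤ (p t).1 ∧ (p t).1 ≤ ℓ ∧ 1 ≤ (p t).2) ∧
            (∀ s, 1 ≤ s → s ≤ ℓ →
              (Finset.univ.filter (fun t => (p t).1 = s)).card = n s - n (s - 1)) ∧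
            (∀ t : ℕ, (h : t + 1 < n ℓ) →
              (p ⟨t, Nat.lt_of_succ_lt h⟩).2 < (p ⟨t + 1, h⟩).2 ∨
              ((p ⟨t, Nat.lt_of_succ_lt h⟩).2 = (p ⟨t + 1, h⟩).2 ∧
                (p ⟨t, Nat.lt_of_succ_lt h⟩).1 > (p ⟨t + 1, h⟩).1)) ∧
            (∀ t : ℕ, (h : t + 1 < n ℓ) →
              ((p ⟨t + 1, h⟩).2 : ℤ) - ((p ⟨t, Nat.lt_of_succ_lt h⟩).2 : ℤ) ≥
                theta (((p ⟨t, Nat.lt_of_succ_lt h⟩).1 : ℤ) - ((p ⟨t + 1, h⟩).1 : ℤ)) + 1)},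
      ∀ a, (∑ t, (((e a).1 t).2 : ℤ)) =
        (∑ i, ∑ s, ((a.1 i s : ℤ))) +
        ((∑ i ∈ Finset.Icc 1 ℓ, (n i : ℤ) ^ 2)
          - ∑ i ∈ Finset.Icc 1 (ℓ - 1), (n i : ℤ) * (n (i + 1) : ℤ)) :=
  stmt4_general ℓ n h0 hmono
end

section
/- Let α = n_1 α_1 + … + n_ℓ α_ℓ with integers n_i. Then α can be written as a sum (with nonnegative integer multiplicities) of the roots (ij) = α_i + α_{i+1} + … + α_j, over 1 ≤ i ≤ m and m ≤ j ≤ ℓ, if and only if 0 ≤ n_1 ≤ n_2 ≤ … ≤ n_m and n_m ≥ n_{m+1} ≥ … ≥ n_ℓ ≥ 0. -/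
/-!
Each color `(ij)` contributes to the coefficient of `α_t` a `0/1` sequence in `t` that increases up
to `m` and decreases after it, so every nonnegative combination of colors is unimodal in this sense.
Conversely, extend `n` by `n 0 = n (ℓ + 1) = 0`. The number of colors `(i', j')` with `i' ≤ i` and
`j ≤ j'` ought to be `F i j = min (n i) (n j)`, and the multiplicities are recovered from `F` by
inclusion–exclusion. They are nonnegative because `min` is supermodular and `n` increases on
`[0, m]` and decreases on `[m, ℓ + 1]`; summed over the colors through `t`, they telescope to
`F (min t m) (max t m) = n t`.
-/

open Finset

theorem Finset.sum_Icc_one_sub_pred {M : Type*} [AddCommGroup M] (f : ℕ → M) (a : ℕ) :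
    ∑ i ∈ Icc 1 a, (f i - f (i - 1)) = f a - f 0 := by
  induction a with
  | zero => simp
  | succ a ih => rw [sum_Icc_succ_top (by omega), ih, Nat.add_sub_cancel]; abel

theorem Finset.sum_Icc_sub_succ {M : Type*} [AddCommGroup M] (f : ℕ → M) {b L : ℕ} (hbL : b ≤ L) :
    ∑ j ∈ Icc b L, (f j - f (j + 1)) = f b - f (L + 1) := by
  rw [← neg_sub, ← sum_Icc_sub hbL, ← sum_neg_distrib]
  simp only [neg_sub]

def cornerDiff {M : Type*} [AddCommGroup M] (F : ℕ → ℕ → M) (i j : ℕ) : M :=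
  F i j - F (i - 1) j - F i (j + 1) + F (i - 1) (j + 1)

theorem sum_cornerDiff {M : Type*} [AddCommGroup M] (F : ℕ → ℕ → M) (a : ℕ) {b L : ℕ}
    (hbL : b ≤ L) :
    ∑ p ∈ Icc 1 a ×ˢ Icc b L, cornerDiff F p.1 p.2 = F a b - F 0 b - F a (L + 1) + F 0 (L + 1) := by
  have inner : ∀ i, ∑ j ∈ Icc b L, cornerDiff F i j =
      (F i b - F (i - 1) b) - (F i (L + 1) - F (i - 1) (L + 1)) := fun i => by
    rw [← sum_Icc_sub_succ (fun j => F i j - F (i - 1) j) hbL]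
    exact sum_congr rfl fun j _ => by simp only [cornerDiff]; abel
  rw [sum_product, sum_congr rfl fun i _ => inner i, sum_sub_distrib,
    sum_Icc_one_sub_pred (F · b), sum_Icc_one_sub_pred (F · (L + 1))]
  abel

theorem min_add_min_le_min_add_min {a a' b b' : ℤ} (ha : a ≤ a') (hb : b ≤ b') :
    min a b' + min a' b ≤ min a b + min a' b' := by
  omega

/-- `colorSum m ℓ c t` is the coefficient of `α_t` in `∑ c (i, j) • (ij)`. -/
def colorSum (m ℓ : ℕ) (c : ℕ × ℕ → ℕ) (t : ℕ) : ℤ :=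
  ∑ p ∈ Icc 1 m ×ˢ Icc m ℓ, (c p : ℤ) * if p.1 ≤ t ∧ t ≤ p.2 then 1 else 0

section colorSum

variable {m ℓ : ℕ} (c : ℕ × ℕ → ℕ)

theorem colorSum_nonneg (t : ℕ) : 0 ≤ colorSum m ℓ c t :=
  sum_nonneg fun _ _ => by positivity

theorem colorSum_le_colorSum_succ {t : ℕ} (htm : t < m) :
    colorSum m ℓ c t ≤ colorSum m ℓ c (t + 1) := by
  unfold colorSum
  gcongr with p hp
  simp only [mem_product, mem_Icc] at hp
  split_ifs <;> omega

theorem colorSum_succ_le_colorSum {t : ℕ} (hmt : m ≤ t) :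
    colorSum m ℓ c (t + 1) ≤ colorSum m ℓ c t := by
  unfold colorSum
  gcongr with p hp
  simp only [mem_product, mem_Icc] at hp
  split_ifs <;> omega

theorem colorSum_eq_sum_Icc_prod_Icc (t : ℕ) :
    colorSum m ℓ c t = ∑ p ∈ Icc 1 (min t m) ×ˢ Icc (max t m) ℓ, (c p : ℤ) := by
  have hfilter : Icc 1 (min t m) ×ˢ Icc (max t m) ℓ =
      (Icc 1 m ×ˢ Icc m ℓ).filter fun p => p.1 ≤ t ∧ t ≤ p.2 := by
    ext ⟨i, j⟩
    simp only [mem_product, mem_Icc, mem_filter]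
    omega
  rw [colorSum, hfilter, sum_filter]
  simp only [mul_ite, mul_one, mul_zero]

end colorSum

theorem exists_colorSum_eq_of_unimodal {m ℓ : ℕ} (hmℓ : m ≤ ℓ) {N : ℕ → ℤ} (h0 : N 0 = 0)
    (hℓ : N (ℓ + 1) = 0) (hmono : MonotoneOn N (Set.Icc 0 m))
    (hanti : AntitoneOn N (Set.Icc m (ℓ + 1))) :
    ∃ c : ℕ × ℕ → ℕ, ∀ t, 1 ≤ t → t ≤ ℓ → N t = colorSum m ℓ c t := by
  set F : ℕ → ℕ → ℤ := fun i j => min (N i) (N j)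
  have hmono' : ∀ {i i'}, i ≤ i' → i' ≤ m → N i ≤ N i' := fun hii' hi' =>
    hmono ⟨Nat.zero_le _, hii'.trans hi'⟩ ⟨Nat.zero_le _, hi'⟩ hii'
  have hanti' : ∀ {j j'}, m ≤ j → j ≤ j' → j' ≤ ℓ + 1 → N j' ≤ N j := fun hj hjj' hj' =>
    hanti ⟨hj, hjj'.trans hj'⟩ ⟨hj.trans hjj', hj'⟩ hjj'
  have hcorner : ∀ p ∈ Icc 1 m ×ˢ Icc m ℓ, 0 ≤ cornerDiff F p.1 p.2 := by
    rintro ⟨i, j⟩ hp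
    simp only [mem_product, mem_Icc] at hp
    have := min_add_min_le_min_add_min (hmono' (i.sub_le 1) hp.1.2)
      (hanti' hp.2.1 j.le_succ (by omega))
    simp only [cornerDiff, F]
    linarith
  refine ⟨fun p => (cornerDiff F p.1 p.2).toNat, fun t ht htℓ => ?_⟩
  have hsub : Icc 1 (min t m) ×ˢ Icc (max t m) ℓ ⊆ Icc 1 m ×ˢ Icc m ℓ :=
    product_subset_product (Icc_subset_Icc_right (min_le_right _ _))
      (Icc_subset_Icc_left (le_max_right _ _))
  rw [colorSum_eq_sum_Icc_prod_Icc,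
    sum_congr rfl fun p hp => Int.toNat_of_nonneg (hcorner p (hsub hp)),
    sum_cornerDiff F _ (max_le htℓ hmℓ)]
  have hF : F (min t m) (max t m) = N t := by
    rcases le_total t m with h | h
    · rw [min_eq_left h, max_eq_right h]
      exact min_eq_left (hmono' h le_rfl)
    · rw [min_eq_right h, max_eq_left h]
      exact min_eq_right (hanti' le_rfl h (by omega))
  have hleft : 0 ≤ N (min t m) := h0 ▸ hmono' (Nat.zero_le _) (min_le_right _ _)
  have hright : 0 ≤ N (max t m) := hℓ ▸ hanti' (le_max_right _ _) (by omega) le_rfl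
  simp only [hF, F, h0, hℓ, min_eq_left hright, min_eq_right hleft, min_self]
  ring

section indicator

variable {ℓ m : ℕ} {n : ℕ → ℤ}

theorem monotoneOn_indicator_Icc (hmℓ : m ≤ ℓ) (h1 : 0 ≤ n 1)
    (hup : ∀ t, 1 ≤ t → t < m → n t ≤ n (t + 1)) :
    MonotoneOn ((Set.Icc 1 ℓ).indicator n) (Set.Icc 0 m) := by
  refine monotoneOn_of_le_add_one Set.ordConnected_Icc fun t _ _ ht1 => ?_
  rw [Set.indicator_of_mem (show t + 1 ∈ Set.Icc 1 ℓ by simp at ht1 ⊢; omega)]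
  rcases Nat.eq_zero_or_pos t with rfl | ht
  · simpa using h1
  · rw [Set.indicator_of_mem (show t ∈ Set.Icc 1 ℓ by simp at ht1 ⊢; omega)]
    exact hup t ht (by simp at ht1; omega)

theorem antitoneOn_indicator_Icc (hm : 1 ≤ m) (hℓ : 0 ≤ n ℓ)
    (hdown : ∀ t, m ≤ t → t < ℓ → n (t + 1) ≤ n t) :
    AntitoneOn ((Set.Icc 1 ℓ).indicator n) (Set.Icc m (ℓ + 1)) := by
  refine antitoneOn_of_add_one_le Set.ordConnected_Icc fun t _ ht ht1 => ?_
  simp only [Set.mem_Icc] at ht ht1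
  rw [Set.indicator_of_mem (show t ∈ Set.Icc 1 ℓ by simp; omega)]
  rcases Nat.lt_or_ge t ℓ with htℓ | htℓ
  · rw [Set.indicator_of_mem (show t + 1 ∈ Set.Icc 1 ℓ by simp; omega)]
    exact hdown t ht.1 htℓ
  · rwa [Set.indicator_of_notMem (by simp; omega), show t = ℓ by omega]

end indicator

/-- α = n_1α_1 + … + n_ℓα_ℓ is a nonnegative integer combination of the colors
(ij) = α_i + … + α_j (1 ≤ i ≤ m ≤ j ≤ ℓ) iff 0 ≤ n_1 ≤ … ≤ n_m ≥ … ≥ n_ℓ ≥ 0. -/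
theorem stmt7 (ℓ m : ℕ) (hm : 1 ≤ m) (hml : m ≤ ℓ) (n : ℕ → ℤ) :
    (∃ c : ℕ × ℕ → ℕ, ∀ t, 1 ≤ t → t ≤ ℓ →
        n t = ∑ p ∈ Finset.Icc 1 m ×ˢ Finset.Icc m ℓ,
          (c p : ℤ) * (if p.1 ≤ t ∧ t ≤ p.2 then 1 else 0)) ↔
    (0 ≤ n 1 ∧ (∀ t, 1 ≤ t → t < m → n t ≤ n (t + 1)) ∧
      (∀ t, m ≤ t → t < ℓ → n (t + 1) ≤ n t) ∧ 0 ≤ n ℓ) := by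
  constructor
  · rintro ⟨c, hc⟩
    refine ⟨?_, fun t ht htm => ?_, fun t hmt htℓ => ?_, ?_⟩
    · exact hc 1 le_rfl (hm.trans hml) ▸ colorSum_nonneg c 1
    · rw [hc t ht (by omega), hc (t + 1) (by omega) (by omega)]
      exact colorSum_le_colorSum_succ c htm
    · rw [hc t (by omega) htℓ.le, hc (t + 1) (by omega) htℓ]
      exact colorSum_succ_le_colorSum c hmt
    · exact hc ℓ (hm.trans hml) le_rfl ▸ colorSum_nonneg c ℓ
  · rintro ⟨h1, hup, hdown, hℓ⟩
    obtain ⟨c, hc⟩ := exists_colorSum_eq_of_unimodal hml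
      (Set.indicator_of_notMem (by simp) n) (Set.indicator_of_notMem (by simp) n)
      (monotoneOn_indicator_Icc hml h1 hup) (antitoneOn_indicator_Icc hm hℓ hdown)
    exact ⟨c, fun t ht htℓ =>
      (Set.indicator_of_mem (Set.mem_Icc.2 ⟨ht, htℓ⟩) n).symm.trans (hc t ht htℓ)⟩
end

section
/- Let α = n_1α_1 + n_2α_2 + n_3α_3 + n_4α_4 with integer coefficients. Then α is expressible as a nonnegative integer combination of the six D_4 colors 2̲ = α_1, 3̲ = α_1+α_2, 4̲ = α_1+α_2+α_3, 4 = α_1+α_2+α_4, 3 = α_1+α_2+α_3+α_4, 2 = α_1+2α_2+α_3+α_4, if and only if all eight inequalities hold: n_1−n_2+n_4 ≥ 0, n_1−n_2+n_3 ≥ 0, n_2−n_3 ≥ 0, n_1−n_3 ≥ 0, n_3 ≥ 0, n_2−n_4 ≥ 0, n_4 ≥ 0, n_1−n_4 ≥ 0. -/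
/-! Each of the eight linear forms is nonnegative on all six colors, which gives necessity.
Conversely, the color 2 is the only one with more α_2 than α_1, and the color 3 the only one with
more α_3 + α_4 than α_2. Using these two colors exactly as often as forced,
c₂ = max 0 (n₂ - n₁) and c₃ = max 0 (n₃ + n₄ - n₂), the other four multiplicities are determined,
and the inequalities make them nonnegative. -/

/-- `m2, m3, m4` count the colors 2̲, 3̲, 4̲ and `c4, c3, c2` the colors 4, 3, 2. -/
def IsD4ColorSum (n1 n2 n3 n4 : ℤ) : Prop :=
  ∃ m2 m3 m4 c4 c3 c2 : ℕ,
    n1 = m2 + m3 + m4 + c4 + c3 + c2 ∧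
    n2 = m3 + m4 + c4 + c3 + 2 * c2 ∧
    n3 = m4 + c3 + c2 ∧
    n4 = c4 + c3 + c2

theorem IsD4ColorSum.inequalities {n1 n2 n3 n4 : ℤ} (h : IsD4ColorSum n1 n2 n3 n4) :
    n1 - n2 + n4 ≥ 0 ∧ n1 - n2 + n3 ≥ 0 ∧ n2 - n3 ≥ 0 ∧ n1 - n3 ≥ 0 ∧
      n3 ≥ 0 ∧ n2 - n4 ≥ 0 ∧ n4 ≥ 0 ∧ n1 - n4 ≥ 0 := by
  obtain ⟨m2, m3, m4, c4, c3, c2, rfl, rfl, rfl, rfl⟩ := h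
  omega

theorem isD4ColorSum_of_inequalities {n1 n2 n3 n4 : ℤ}
    (h : n1 - n2 + n4 ≥ 0 ∧ n1 - n2 + n3 ≥ 0 ∧ n2 - n3 ≥ 0 ∧ n1 - n3 ≥ 0 ∧
      n3 ≥ 0 ∧ n2 - n4 ≥ 0 ∧ n4 ≥ 0 ∧ n1 - n4 ≥ 0) :
    IsD4ColorSum n1 n2 n3 n4 := by
  set c2 : ℤ := max 0 (n2 - n1)
  set c3 : ℤ := max 0 (n3 + n4 - n2)
  refine ⟨(n1 - n2 + c2).toNat, (n2 - n3 - n4 + c3).toNat, (n3 - c3 - c2).toNat,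
    (n4 - c3 - c2).toNat, c3.toNat, c2.toNat, ?_, ?_, ?_, ?_⟩ <;> omega

/-- α = n_1α_1+n_2α_2+n_3α_3+n_4α_4 is a nonnegative integer combination of the six
D_4 colors 2̲ = α_1, 3̲ = α_1+α_2, 4̲ = α_1+α_2+α_3, 4 = α_1+α_2+α_4,
3 = α_1+α_2+α_3+α_4, 2 = α_1+2α_2+α_3+α_4 iff the eight inequalities hold. -/
theorem stmt12 (n1 n2 n3 n4 : ℤ) :
    (∃ m2 m3 m4 c4 c3 c2 : ℕ,
      n1 = m2 + m3 + m4 + c4 + c3 + c2 ∧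
      n2 = m3 + m4 + c4 + c3 + 2 * c2 ∧
      n3 = m4 + c3 + c2 ∧
      n4 = c4 + c3 + c2) ↔
    (n1 - n2 + n4 ≥ 0 ∧ n1 - n2 + n3 ≥ 0 ∧ n2 - n3 ≥ 0 ∧ n1 - n3 ≥ 0 ∧
      n3 ≥ 0 ∧ n2 - n4 ≥ 0 ∧ n4 ≥ 0 ∧ n1 - n4 ≥ 0) :=
  ⟨IsD4ColorSum.inequalities, isD4ColorSum_of_inequalities⟩
end

section
/- For integers n ≥ m ≥ 0, identify the two-color alphabet {3̲, 3} with {(2), (1)} from type A_2 with ω = ω_2. Then the generating function χ_{Γ''}^{α''}(q) over sequences ((γ_1, r_1), …, (γ_{n}, r_{n})) with colors in {3̲, 3}, exactly m occurrences of 3, r_1 ≥ 1, and differences r_{t+1} − r_t ≥ 1 + θ(γ_{t+1} ≥ γ_t) (θ = 1 if the inequality in the order 3 > 3̲ holds, else 0), graded by q^{r_1+…+r_n}, equals q^{n² + m² − nm} / ((q)_m (q)_{n−m}). -/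
/-!
Subtracting from an admissible sequence `r` the smallest admissible sequence for its colour word
`γ` leaves an arbitrary nondecreasing sequence of naturals, so the series factors as
`U(n, m) / (q)_n` with `U(n, m) = ∑_γ q^{|r_min(γ)|}`. Splitting off the first letter of `γ`
gives a joint recursion for `U` and for its part over words beginning with `3`; solved in the
cleared-denominator form `U(a + b, a) (q)_a (q)_b = q^{a² + ab + b²} (q)_{a+b}`, it shows that
`U(n, m)` is `q^{n² + m² - nm}` times the Gaussian binomial `[n choose m]_q`.
-/

open PowerSeries Finset

namespace ColoredSequences

noncomputable section

def qPochhammer (j : ℕ) : PowerSeries ℚ := ∏ t ∈ range j, (1 - X ^ (t + 1))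

lemma qPochhammer_succ (j : ℕ) : qPochhammer (j + 1) = qPochhammer j * (1 - X ^ (j + 1)) :=
  prod_range_succ _ _

lemma finite_of_sum_le {n : ℕ} (k : ℕ) {P : (Fin n → ℕ) → Prop}
    (h : ∀ y, P y → ∑ t, y t ≤ k) : Finite {y // P y} :=
  Finite.of_injective
    (fun y t => (⟨y.1 t, Nat.lt_succ_of_le <|
      (single_le_sum (fun _ _ => Nat.zero_le _) (mem_univ t)).trans (h y.1 y.2)⟩ : Fin (k + 1)))
    fun _ _ hyz => Subtype.ext <| funext fun t => congrArg Fin.val (congrFun hyz t)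

lemma monotone_of_le_succ {n : ℕ} {f : Fin n → ℕ}
    (h : ∀ (t : ℕ) (ht : t + 1 < n), f ⟨t, Nat.lt_of_succ_lt ht⟩ ≤ f ⟨t + 1, ht⟩) :
    Monotone f := by
  cases n with
  | zero => exact fun i => i.elim0
  | succ n => exact Fin.monotone_iff_le_succ.mpr fun i => h i i.succ.isLt

section MonotoneSequences

def monotoneSeries (n : ℕ) : PowerSeries ℚ :=
  mk fun k => (Nat.card {y : Fin n → ℕ // Monotone y ∧ ∑ t, y t = k} : ℚ)

lemma natCard_monotone_sum_add (n s k : ℕ) :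
    (Nat.card {y : Fin n → ℕ // Monotone y ∧ ∑ t, y t + s = k} : ℚ) =
      coeff k (X ^ s * monotoneSeries n) := by
  rw [coeff_X_pow_mul', monotoneSeries, coeff_mk]
  split_ifs with hs
  · exact congrArg _ <| Nat.card_congr <| Equiv.subtypeEquivRight fun y =>
      and_congr_right' (eq_tsub_iff_add_eq_of_le hs).symm
  · have : IsEmpty {y : Fin n → ℕ // Monotone y ∧ ∑ t, y t + s = k} :=
      ⟨fun y => hs (by omega)⟩
    simp

lemma monotoneSeries_zero : monotoneSeries 0 = 1 := by
  ext k
  rcases eq_or_ne k 0 with rfl | hk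
  · simp [monotoneSeries, Subsingleton.monotone]
  · simp [monotoneSeries, coeff_one, hk, Ne.symm hk]

lemma monotone_cons_zero {n : ℕ} {z : Fin n → ℕ} (hz : Monotone z) :
    Monotone (Fin.cons 0 z : Fin (n + 1) → ℕ) := by
  intro a b hab
  cases a using Fin.cases with
  | zero => simp
  | succ a =>
    cases b using Fin.cases with
    | zero => exact absurd hab (by simp)
    | succ b => simpa using hz (Fin.succ_le_succ_iff.mp hab)

/-- A nondecreasing `y : Fin (n + 1) → ℕ` either starts with `0`, or is `1` plus such a sequence. -/
def monotoneSuccEquiv (n k : ℕ) :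
    {y : Fin (n + 1) → ℕ // Monotone y ∧ ∑ t, y t = k} ≃
      {y : Fin n → ℕ // Monotone y ∧ ∑ t, y t = k} ⊕
      {y : Fin (n + 1) → ℕ // Monotone y ∧ ∑ t, y t + (n + 1) = k} where
  toFun y :=
    if h : y.1 0 = 0 then
      .inl ⟨Fin.tail y.1, fun a b hab => y.2.1 (Fin.succ_le_succ_iff.mpr hab), by
        simpa [Fin.sum_univ_succ, h, Fin.tail] using y.2.2⟩
    else
      have hpos : ∀ t, 1 ≤ y.1 t := fun t =>
        (Nat.one_le_iff_ne_zero.mpr h).trans (y.2.1 t.zero_le)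
      .inr ⟨fun t => y.1 t - 1, fun a b hab => Nat.sub_le_sub_right (y.2.1 hab) 1, by
        have := sum_congr rfl fun t (_ : t ∈ univ) => Nat.sub_add_cancel (hpos t)
        simp only [sum_add_distrib, sum_const, card_univ, Fintype.card_fin, smul_eq_mul,
          mul_one] at this
        exact this.trans y.2.2⟩
  invFun
    | .inl z => ⟨Fin.cons 0 z.1, monotone_cons_zero z.2.1, by
        simpa [Fin.sum_univ_succ] using z.2.2⟩
    | .inr z => ⟨fun t => z.1 t + 1, fun a b hab => Nat.add_le_add_right (z.2.1 hab) 1, by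
        simpa [sum_add_distrib] using z.2.2⟩
  left_inv y := by
    by_cases h : y.1 0 = 0
    · simp only [dif_pos h]
      ext t
      cases t using Fin.cases <;> simp [h, Fin.tail]
    · simp only [dif_neg h]
      ext t
      have := y.2.1 t.zero_le
      simp only
      omega
  right_inv
    | .inl z => by simp
    | .inr z => by simp

lemma monotoneSeries_succ (n : ℕ) :
    monotoneSeries (n + 1) = monotoneSeries n + X ^ (n + 1) * monotoneSeries (n + 1) := by
  ext k
  have := finite_of_sum_le (n := n) (P := fun y => Monotone y ∧ ∑ t, y t = k) k
    fun _ hy => hy.2.le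
  have := finite_of_sum_le (n := n + 1) (P := fun y => Monotone y ∧ ∑ t, y t + (n + 1) = k) k
    fun _ hy => hy.2 ▸ Nat.le_add_right _ _
  rw [map_add, ← natCard_monotone_sum_add]
  simp only [monotoneSeries, coeff_mk]
  rw [Nat.card_congr (monotoneSuccEquiv n k), Nat.card_sum, Nat.cast_add]

theorem monotoneSeries_mul_qPochhammer (n : ℕ) : monotoneSeries n * qPochhammer n = 1 := by
  induction n with
  | zero => simp [monotoneSeries_zero, qPochhammer]
  | succ n ih =>
    rw [qPochhammer_succ]
    linear_combination qPochhammer n * monotoneSeries_succ n + ih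

end MonotoneSequences

section ColourWords

variable {n : ℕ}

/-- The colour word `γ` with `3̲ = 0` and `3 = 1`, read as `3̲` past its end so that gaps can be
indexed by `ℕ`. -/
def letter (w : Fin n → Fin 2) (j : ℕ) : Fin 2 := if h : j < n then w ⟨j, h⟩ else 0

def gap (w : Fin n → Fin 2) (j : ℕ) : ℕ := 1 + if letter w j ≤ letter w (j + 1) then 1 else 0

def minimalSeq (w : Fin n → Fin 2) (t : Fin n) : ℕ := 1 + ∑ j ∈ range t, gap w j

def minimalWeight (w : Fin n → Fin 2) : ℕ := ∑ t, minimalSeq w t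

def numOnes (w : Fin n → Fin 2) : ℕ := (univ.filter fun t => w t = 1).card

def IsAdmissible (w : Fin n → Fin 2) (r : Fin n → ℕ) : Prop :=
  (∀ h : 0 < n, 1 ≤ r ⟨0, h⟩) ∧
  ∀ t : ℕ, (h : t + 1 < n) →
    r ⟨t + 1, h⟩ ≥ r ⟨t, Nat.lt_of_succ_lt h⟩ + 1 +
      (if w ⟨t, Nat.lt_of_succ_lt h⟩ ≤ w ⟨t + 1, h⟩ then 1 else 0)

lemma gap_of_lt (w : Fin n → Fin 2) {t : ℕ} (h : t + 1 < n) :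
    gap w t = 1 + if w ⟨t, Nat.lt_of_succ_lt h⟩ ≤ w ⟨t + 1, h⟩ then 1 else 0 := by
  rw [gap, letter, letter, dif_pos (Nat.lt_of_succ_lt h), dif_pos h]

lemma minimalSeq_zero (w : Fin n → Fin 2) (h : 0 < n) : minimalSeq w ⟨0, h⟩ = 1 := by
  simp [minimalSeq]

lemma minimalSeq_succ (w : Fin n → Fin 2) {t : ℕ} (h : t + 1 < n) :
    minimalSeq w ⟨t + 1, h⟩ = minimalSeq w ⟨t, Nat.lt_of_succ_lt h⟩ + gap w t := by
  simp only [minimalSeq, sum_range_succ]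
  ring

lemma isAdmissible_iff (w : Fin n → Fin 2) (r : Fin n → ℕ) :
    IsAdmissible w r ↔
      (∀ t, minimalSeq w t ≤ r t) ∧ Monotone fun t => r t - minimalSeq w t := by
  constructor
  · rintro ⟨h0, hstep⟩
    have hge : ∀ (j : ℕ) (hj : j < n), minimalSeq w ⟨j, hj⟩ ≤ r ⟨j, hj⟩ := by
      intro j
      induction j with
      | zero => exact fun hj => (minimalSeq_zero w hj).trans_le (h0 hj)
      | succ j ih =>
        intro hj
        have := hstep j hj
        have := ih (Nat.lt_of_succ_lt hj)
        rw [minimalSeq_succ w hj, gap_of_lt w hj]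
        omega
    refine ⟨fun t => hge t t.isLt, monotone_of_le_succ fun t ht => ?_⟩
    have := hstep t ht
    have := hge t (Nat.lt_of_succ_lt ht)
    rw [minimalSeq_succ w ht, gap_of_lt w ht]
    omega
  · rintro ⟨hge, hmono⟩
    refine ⟨fun h => (minimalSeq_zero w h).symm.trans_le (hge _), fun t ht => ?_⟩
    have := hmono (show (⟨t, Nat.lt_of_succ_lt ht⟩ : Fin n) ≤ ⟨t + 1, ht⟩ from Nat.le_succ t)
    have := hge ⟨t, Nat.lt_of_succ_lt ht⟩
    have := hge ⟨t + 1, ht⟩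
    simp only [minimalSeq_succ w ht, gap_of_lt w ht] at *
    omega

def subLowerBoundEquiv (b : Fin n → ℕ) (k : ℕ) :
    {r : Fin n → ℕ // ((∀ t, b t ≤ r t) ∧ Monotone fun t => r t - b t) ∧ ∑ t, r t = k} ≃
      {y : Fin n → ℕ // Monotone y ∧ ∑ t, y t + ∑ t, b t = k} where
  toFun r := ⟨fun t => r.1 t - b t, r.2.1.2, by
    rw [← sum_add_distrib]
    exact (sum_congr rfl fun t _ => Nat.sub_add_cancel (r.2.1.1 t)).trans r.2.2⟩
  invFun y := ⟨fun t => y.1 t + b t,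
    ⟨fun t => Nat.le_add_left _ _, by simpa using y.2.1⟩, (sum_add_distrib).trans y.2.2⟩
  left_inv r := Subtype.ext <| funext fun t => Nat.sub_add_cancel (r.2.1.1 t)
  right_inv y := Subtype.ext <| funext fun t => Nat.add_sub_cancel _ _

lemma natCard_admissible (w : Fin n → Fin 2) (k : ℕ) :
    (Nat.card {r // IsAdmissible w r ∧ ∑ t, r t = k} : ℚ) =
      coeff k (X ^ minimalWeight w * monotoneSeries n) := by
  rw [← natCard_monotone_sum_add, Nat.card_congr <| (Equiv.subtypeEquivRight fun r =>
    and_congr_left' (isAdmissible_iff w r)).trans (subLowerBoundEquiv _ k)]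
  rfl

lemma letter_cons_zero (a : Fin 2) (w : Fin n → Fin 2) : letter (Fin.cons a w) 0 = a := by
  rw [letter, dif_pos n.succ_pos]
  rfl

lemma letter_cons_succ (a : Fin 2) (w : Fin n → Fin 2) (j : ℕ) :
    letter (Fin.cons a w) (j + 1) = letter w j := by
  unfold letter
  by_cases h : j < n
  · rw [dif_pos (Nat.succ_lt_succ h), dif_pos h]
    exact Fin.cons_succ (α := fun _ => Fin 2) a w ⟨j, h⟩
  · rw [dif_neg (by omega), dif_neg h]

lemma minimalWeight_cons (a : Fin 2) (w : Fin n → Fin 2) :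
    minimalWeight (Fin.cons a w) =
      minimalWeight w + (n + 1) + n * if a ≤ letter w 0 then 1 else 0 := by
  have hgap : ∀ j, gap (Fin.cons a w) (j + 1) = gap w j := fun j => by
    rw [gap, gap, letter_cons_succ, letter_cons_succ]
  have hgap0 : gap (Fin.cons a w) 0 = 1 + if a ≤ letter w 0 then 1 else 0 := by
    rw [gap, letter_cons_zero, letter_cons_succ]
  have hseq : ∀ t : Fin n,
      minimalSeq (Fin.cons a w) t.succ = minimalSeq w t + gap (Fin.cons a w) 0 := fun t => by
      rw [minimalSeq, minimalSeq, Fin.val_succ, sum_range_succ']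
      simp only [hgap]
      ring
  rw [minimalWeight, Fin.sum_univ_succ]
  simp only [hseq, sum_add_distrib, sum_const, card_univ, Fintype.card_fin, smul_eq_mul]
  rw [← minimalWeight, hgap0]
  simp only [minimalSeq, Fin.val_zero, range_zero, sum_empty]
  ring

lemma numOnes_cons (a : Fin 2) (w : Fin n → Fin 2) :
    numOnes (Fin.cons a w) = a + numOnes w := by
  rw [numOnes, numOnes, card_filter, card_filter, Fin.sum_univ_succ]
  fin_cases a <;> simp

end ColourWords

section WordSums

def wordSum (n m : ℕ) : PowerSeries ℚ :=
  ∑ w : Fin n → Fin 2, if numOnes w = m then X ^ minimalWeight w else 0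

def wordSumHead (c : Fin 2) (n m : ℕ) : PowerSeries ℚ :=
  ∑ w : Fin n → Fin 2, if numOnes w = m ∧ letter w 0 = c then X ^ minimalWeight w else 0

theorem genFun_admissible_eq_wordSum_mul (n m : ℕ) :
    mk (fun k => (Nat.card {p : (Fin n → Fin 2) × (Fin n → ℕ) //
      numOnes p.1 = m ∧ IsAdmissible p.1 p.2 ∧ ∑ t, p.2 t = k} : ℚ)) =
      wordSum n m * monotoneSeries n := by
  ext k
  have (w : Fin n → Fin 2) : Finite {r // numOnes w = m ∧ IsAdmissible w r ∧ ∑ t, r t = k} :=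
    finite_of_sum_le k fun _ hr => hr.2.2.le
  rw [coeff_mk, Nat.card_congr (Equiv.subtypeProdEquivSigmaSubtype fun w r =>
      numOnes w = m ∧ IsAdmissible w r ∧ ∑ t, r t = k),
    Nat.card_sigma, Nat.cast_sum, wordSum, sum_mul, map_sum]
  refine sum_congr rfl fun w _ => ?_
  split_ifs with hw
  · rw [← natCard_admissible]
    exact congrArg _ (Nat.card_congr (Equiv.subtypeEquivRight fun r => and_iff_right hw))
  · have : IsEmpty {r // numOnes w = m ∧ IsAdmissible w r ∧ ∑ t, r t = k} :=
      ⟨fun r => hw r.2.1⟩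
    simp

lemma sum_fin_cons {M : Type*} [AddCommMonoid M] {n : ℕ} (F : (Fin (n + 1) → Fin 2) → M) :
    ∑ w, F w = ∑ c : Fin 2, ∑ w : Fin n → Fin 2, F (Fin.cons c w) := by
  rw [← (Fin.consEquiv fun _ => Fin 2).sum_comp, Fintype.sum_prod_type]
  rfl

lemma wordSumHead_succ (c : Fin 2) (n m : ℕ) :
    wordSumHead c (n + 1) m = ∑ w : Fin n → Fin 2,
      if numOnes (Fin.cons c w : Fin (n + 1) → Fin 2) = m
      then X ^ minimalWeight (Fin.cons c w : Fin (n + 1) → Fin 2) else 0 := by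
  rw [wordSumHead, sum_fin_cons, Fintype.sum_eq_single c fun d hd => ?_]
  · simp only [letter_cons_zero, and_true]
  · simp [letter_cons_zero, hd]

lemma wordSumHead_zero_succ (n m : ℕ) :
    wordSumHead 0 (n + 1) m = X ^ (2 * n + 1) * wordSum n m := by
  rw [wordSumHead_succ, wordSum, mul_sum]
  refine sum_congr rfl fun w _ => ?_
  simp only [numOnes_cons, minimalWeight_cons, Fin.val_zero, zero_add, zero_le, if_true]
  split_ifs <;> ring

lemma wordSumHead_one_succ (n m : ℕ) :
    wordSumHead 1 (n + 1) (m + 1) =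
      X ^ (2 * n + 1) * wordSumHead 1 n m + X ^ (n + 1) * wordSumHead 0 n m := by
  rw [wordSumHead_succ, wordSumHead, wordSumHead, mul_sum, mul_sum, ← sum_add_distrib]
  refine sum_congr rfl fun w _ => ?_
  simp only [numOnes_cons, minimalWeight_cons, Fin.val_one, add_comm 1,
    Nat.add_right_cancel_iff]
  generalize letter w 0 = c
  fin_cases c <;> simp <;> split_ifs <;> ring

lemma wordSum_eq_add (n m : ℕ) : wordSum n m = wordSumHead 0 n m + wordSumHead 1 n m := by
  rw [wordSum, wordSumHead, wordSumHead, ← sum_add_distrib]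
  refine sum_congr rfl fun w _ => ?_
  generalize letter w 0 = c
  fin_cases c <;> simp

lemma wordSum_of_lt {n m : ℕ} (h : n < m) : wordSum n m = 0 :=
  sum_eq_zero fun w _ => if_neg fun hw => by
    have := (card_filter_le univ fun t => w t = 1).trans_eq (card_fin n)
    rw [← numOnes, hw] at this
    omega

lemma wordSumHead_one_zero (n : ℕ) : wordSumHead 1 n 0 = 0 :=
  sum_eq_zero fun w _ => if_neg fun ⟨h0, h1⟩ => by
    unfold letter at h1
    split_ifs at h1 with hn
    · rw [numOnes, card_eq_zero, filter_eq_empty_iff] at h0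
      exact h0 (mem_univ _) h1
    · exact absurd h1 (by decide)

lemma wordSum_zero_zero : wordSum 0 0 = 1 := by
  simp [wordSum, numOnes, minimalWeight]

def WordSumFormula (N : ℕ) : Prop :=
  ∀ a b, a + b = N →
    wordSum N a * qPochhammer a * qPochhammer b = X ^ (a * a + a * b + b * b) * qPochhammer N

def HeadOneFormula (N : ℕ) : Prop :=
  ∀ a b, a + b = N → wordSumHead 1 (N + 1) (a + 1) * qPochhammer a * qPochhammer b =
    X ^ ((a + 1) * (a + 1) + (a + 1) * b + b * b) * qPochhammer N

lemma wordSumFormula_succ {N : ℕ} (hW : WordSumFormula N) (hO : HeadOneFormula N) :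
    WordSumFormula (N + 1) := by
  intro a b hab
  rw [wordSum_eq_add, wordSumHead_zero_succ]
  rcases a with _ | a
  · obtain rfl : b = N + 1 := by omega
    rw [wordSumHead_one_zero, qPochhammer_succ]
    linear_combination X ^ (2 * N + 1) * (1 - X ^ (N + 1)) * hW 0 N (zero_add N)
  rcases b with _ | b
  · obtain rfl : a = N := by omega
    rw [wordSum_of_lt (Nat.lt_succ_self a), qPochhammer_succ]
    linear_combination (1 - X ^ (a + 1)) * hO a 0 (add_zero a)
  obtain rfl : N = a + 1 + b := by omega
  have hW' := hW (a + 1) b rfl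
  have hO' := hO a (b + 1) (by omega)
  rw [qPochhammer_succ a] at hW' ⊢
  rw [qPochhammer_succ b] at hO' ⊢
  rw [qPochhammer_succ (a + 1 + b)]
  linear_combination X ^ (2 * (a + 1 + b) + 1) * (1 - X ^ (b + 1)) * hW' +
    (1 - X ^ (a + 1)) * hO'

lemma headOneFormula_succ {N : ℕ} (hW : WordSumFormula N) (hO : HeadOneFormula N) :
    HeadOneFormula (N + 1) := by
  intro a b hab
  rw [wordSumHead_one_succ, wordSumHead_zero_succ]
  rcases a with _ | a
  · obtain rfl : b = N + 1 := by omega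
    rw [wordSumHead_one_zero, qPochhammer_succ]
    linear_combination X ^ (N + 2) * X ^ (2 * N + 1) * (1 - X ^ (N + 1)) * hW 0 N (zero_add N)
  rcases b with _ | b
  · obtain rfl : a = N := by omega
    rw [wordSum_of_lt (Nat.lt_succ_self a), qPochhammer_succ]
    linear_combination X ^ (2 * a + 3) * (1 - X ^ (a + 1)) * hO a 0 (add_zero a)
  obtain rfl : N = a + 1 + b := by omega
  have hW' := hW (a + 1) b rfl
  have hO' := hO a (b + 1) (by omega)
  rw [qPochhammer_succ a] at hW' ⊢
  rw [qPochhammer_succ b] at hO' ⊢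
  rw [qPochhammer_succ (a + 1 + b)]
  linear_combination X ^ (2 * (a + 1 + b) + 3) * (1 - X ^ (a + 1)) * hO' +
    X ^ (a + 1 + b + 2) * X ^ (2 * (a + 1 + b) + 1) * (1 - X ^ (b + 1)) * hW'

lemma wordSumFormula_and_headOneFormula (N : ℕ) : WordSumFormula N ∧ HeadOneFormula N := by
  induction N with
  | zero =>
    have hZ : wordSumHead 0 0 0 = 1 := by
      simpa [wordSum_zero_zero, wordSumHead_one_zero] using (wordSum_eq_add 0 0).symm
    refine ⟨fun a b hab => ?_, fun a b hab => ?_⟩ <;>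
      obtain ⟨rfl, rfl⟩ : a = 0 ∧ b = 0 := by omega
    · simp [wordSum_zero_zero, qPochhammer]
    · simp [wordSumHead_one_succ, wordSumHead_one_zero, hZ, qPochhammer]
  | succ N ih => exact ⟨wordSumFormula_succ ih.1 ih.2, headOneFormula_succ ih.1 ih.2⟩

theorem wordSum_mul_qPochhammer (a b : ℕ) :
    wordSum (a + b) a * qPochhammer a * qPochhammer b =
      X ^ (a * a + a * b + b * b) * qPochhammer (a + b) :=
  (wordSumFormula_and_headOneFormula (a + b)).1 a b rfl

end WordSums

end

end ColoredSequences

open ColoredSequences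

/-- Formula (4.13): the generating function over sequences ((γ_1,r_1),…,(γ_n,r_n)) with
colors in {3̲, 3} (encoded Fin 2 with 3̲ = 0 < 3 = 1), exactly m occurrences of 3,
r_1 ≥ 1 and r_{t+1} − r_t ≥ 2 if γ_{t+1} ≥ γ_t, ≥ 1 otherwise, graded by q^{Σ r_t},
equals q^{n²+m²−nm}/((q)_m (q)_{n−m}). -/
theorem stmt18 (n m : ℕ) (hm : m ≤ n) :
    PowerSeries.mk (fun k => (Nat.card
      {p : (Fin n → Fin 2) × (Fin n → ℕ) //
        (Finset.univ.filter (fun t => p.1 t = 1)).card = m ∧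
        (∀ h : 0 < n, 1 ≤ p.2 ⟨0, h⟩) ∧
        (∀ t : ℕ, (h : t + 1 < n) →
          p.2 ⟨t + 1, h⟩ ≥ p.2 ⟨t, Nat.lt_of_succ_lt h⟩ + 1 +
            (if p.1 ⟨t, Nat.lt_of_succ_lt h⟩ ≤ p.1 ⟨t + 1, h⟩ then 1 else 0)) ∧
        (∑ t, p.2 t) = k} : ℚ)) *
      ((∏ t ∈ Finset.range m, (1 - (PowerSeries.X : PowerSeries ℚ) ^ (t + 1))) *
        (∏ t ∈ Finset.range (n - m), (1 - (PowerSeries.X : PowerSeries ℚ) ^ (t + 1))))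
    = PowerSeries.X ^ (n ^ 2 + m ^ 2 - n * m) := by
  obtain ⟨b, rfl⟩ := Nat.exists_eq_add_of_le hm
  have hseries := genFun_admissible_eq_wordSum_mul (m + b) m
  simp only [IsAdmissible, numOnes, and_assoc] at hseries
  have hexp : (m + b) ^ 2 + m ^ 2 - (m + b) * m = m * m + m * b + b * b := by
    rw [Nat.sub_eq_of_eq_add]
    ring
  rw [hseries, Nat.add_sub_cancel_left, hexp]
  change _ * (qPochhammer m * qPochhammer b) = _
  linear_combination monotoneSeries (m + b) * wordSum_mul_qPochhammer m b +
    X ^ (m * m + m * b + b * b) * monotoneSeries_mul_qPochhammer (m + b)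
end
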